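/- Let h := (#Φ0)/r be the Coxeter number of W0, let E′ ⊆ E be the ℝ-span of the coroots {α∨ : α ∈ Φ0}, and let pr_{E′} : E → E′ be the orthogonal projection. Then for all y ∈ E: (1/h)·∑_{α ∈ Φ0+} α(y)·α∨ = pr_{E′}(y). In particular, the coweight lattice P∨ := {λ ∈ E′ : α(λ) ∈ ℤ for all α ∈ Φ0} satisfies P∨ ⊆ (1/h)·Q∨. -/

import Mathlib

open scoped InnerProductSpace Classical

noncomputable section

namespace SSV

variable {E : Type*} [NormedAddCommGroup E] [InnerProductSpace ℝ E]

/-- The coroot `α∨ = (2/‖α‖²)·α` of `α ∈ E`, under the identification of `E*` with `E`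
via the inner product (a root `α` acts on `E` as the linear functional `y ↦ ⟪α,y⟫`). -/
def cv (α : E) : E := (2 / ⟪α, α⟫_ℝ) • α

/-- The linear functional `y ↦ ⟪α∨, y⟫ = 2⟪α,y⟫/‖α‖²`. -/
def rootForm (α : E) : E →ₗ[ℝ] ℝ where
  toFun y := 2 / ⟪α, α⟫_ℝ * ⟪α, y⟫_ℝ
  map_add' y z := by rw [inner_add_right]; ring
  map_smul' c y := by
    simp only [RingHom.id_apply, smul_eq_mul, real_inner_smul_right]
    ring

/-- The orthogonal reflection `s_α : y ↦ y − α(y)·α∨` in the hyperplane `α = 0`. -/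
def lrefl (α : E) : E ≃ₗ[ℝ] E :=
  if h : ⟪α, α⟫_ℝ = 0 then LinearEquiv.refl ℝ E
  else
    Module.reflection (f := rootForm α) (x := α)
      (by simp only [rootForm, LinearMap.coe_mk, AddHom.coe_mk]; field_simp)

/-- The affine reflection `s_a : y ↦ y − a(y)·α∨` associated to the affine root
`a = (α, c)`, i.e. to the affine function `y ↦ α(y) + c = ⟪α,y⟫ + c` on `E`. -/
def aRefl (α : E) (c : ℝ) : E ≃ᵃ[ℝ] E :=
  (lrefl α).toAffineEquiv.trans (AffineEquiv.constVAdd ℝ E (-(c • cv α)))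

/-- The translation `τ(μ) : y ↦ y + μ`. -/
def tr (μ : E) : E ≃ᵃ[ℝ] E := AffineEquiv.constVAdd ℝ E μ

/-- `η = χ_{ℤ_{>0}} − χ_{ℤ_{≤0}} : ℝ → {−1,0,1}`. -/
def eta (x : ℝ) : ℤ :=
  if ∃ n : ℤ, x = (n : ℝ) then (if 0 < x then 1 else -1) else 0

/-- `sgn(ℓ) = ℓ/|ℓ|` for `ℓ ≠ 0`, and `sgn(0) = 1`. -/
def sgnz (l : ℤ) : ℤ := if 0 ≤ l then 1 else -1

/-- The alternating word `j j' j j' ⋯` of length `m`. -/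
def altList {n : ℕ} (j j' : Fin n) (m : ℕ) : List (Fin n) :=
  (List.range m).map fun s => if s % 2 = 0 then j else j'

/-- Evaluation of the affine function `a = (α, c)` at `y`: `a(y) = α(y) + c`. -/
def aval (a : E × ℝ) (y : E) : ℝ := ⟪a.1, y⟫_ℝ + a.2

/-- The contragredient action of `w` on affine roots: `(w·a)(y) = a(w⁻¹·y)`. -/
def wact (w : E ≃ᵃ[ℝ] E) (a : E × ℝ) : E × ℝ :=
  (w.linear a.1, a.2 - ⟪w.linear a.1, w 0⟫_ℝ)

/-- The relation `y ≺_α z`. -/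
def precA (α : E) (y z : E) : Prop :=
  (∃ l : ℤ, y = aRefl α (l : ℝ) z) ∧
    (|⟪α, y⟫_ℝ| < |⟪α, z⟫_ℝ| ∨ (⟪α, y⟫_ℝ = -⟪α, z⟫_ℝ ∧ 0 < ⟪α, y⟫_ℝ))

/-- The data of a reduced irreducible finite root system `Φ0` realised in `E* ≅ E`,
normalised so that long roots have squared length `2/m²`, together with a choice of
positive roots, simple roots `α_1, …, α_r`, and the corresponding highest root `φ`. -/
structure Data (E : Type*) [NormedAddCommGroup E] [InnerProductSpace ℝ E] where
  r : ℕ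
  r_pos : 0 < r
  m : ℕ
  m_pos : 0 < m
  Φ0 : Finset E
  pos : Finset E
  simple : Fin r → E
  hroot : E
  root_ne_zero : ∀ α ∈ Φ0, α ≠ 0
  root_neg_mem : ∀ α ∈ Φ0, -α ∈ Φ0
  root_reduced : ∀ α ∈ Φ0, ∀ c : ℝ, c • α ∈ Φ0 → c = 1 ∨ c = -1
  root_refl_mem : ∀ α ∈ Φ0, ∀ β ∈ Φ0, aRefl α 0 β ∈ Φ0
  root_crystal : ∀ α ∈ Φ0, ∀ β ∈ Φ0, ∃ n : ℤ, ⟪cv β, α⟫_ℝ = (n : ℝ)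
  root_irred : ∀ A B : Set E, (Φ0 : Set E) = A ∪ B → A.Nonempty → B.Nonempty →
    (∀ a ∈ A, ∀ b ∈ B, ⟪a, b⟫_ℝ = 0) → False
  root_norm_le : ∀ α ∈ Φ0, ⟪α, α⟫_ℝ ≤ 2 / (m : ℝ) ^ 2
  root_norm_int : ∀ α ∈ Φ0, ∃ n : ℤ, (n : ℝ) * ⟪α, α⟫_ℝ = 2
  pos_subset : pos ⊆ Φ0
  pos_dichotomy : ∀ α ∈ Φ0, (α ∈ pos ∧ -α ∉ pos) ∨ (α ∉ pos ∧ -α ∈ pos)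
  simple_mem_pos : ∀ i, simple i ∈ pos
  simple_indep : LinearIndependent ℝ simple
  pos_nat_comb : ∀ α ∈ pos, ∃ n : Fin r → ℕ, α = ∑ i, (n i : ℝ) • simple i
  hroot_mem_pos : hroot ∈ pos
  hroot_long : ⟪hroot, hroot⟫_ℝ = 2 / (m : ℝ) ^ 2
  hroot_highest : ∀ α ∈ Φ0, ∃ n : Fin r → ℕ, hroot - α = ∑ i, (n i : ℝ) • simple i

namespace Data

variable (D : Data E)

/-- The coroot lattice `Q∨`. -/
def Qv : AddSubgroup E := AddSubgroup.closure (cv '' (D.Φ0 : Set E))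

/-- The simple affine roots `α_0 = (−φ, 1)` and `α_i = (α_i, 0)` (`1 ≤ i ≤ r`), as pairs
`(gradient, constant term)`. -/
def asimple : Fin (D.r + 1) → E × ℝ :=
  Fin.cases (-D.hroot, (1 : ℝ)) fun i => (D.simple i, (0 : ℝ))

/-- The simple reflections `s_0, …, s_r` of the affine Weyl group. -/
def sgen (j : Fin (D.r + 1)) : E ≃ᵃ[ℝ] E := aRefl (D.asimple j).1 (D.asimple j).2

/-- `a = (α, c)` is an affine root iff `α ∈ Φ0` and `c ∈ ℤ`. -/
def IsAffRoot (a : E × ℝ) : Prop := a.1 ∈ D.Φ0 ∧ ∃ n : ℤ, a.2 = (n : ℝ)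

/-- `a` is a positive affine root. -/
def IsPosAff (a : E × ℝ) : Prop :=
  D.IsAffRoot a ∧ (0 < a.2 ∨ (a.2 = 0 ∧ a.1 ∈ D.pos))

/-- The set of reflections `s_α`, `α ∈ Φ0`. -/
def reflSet : Set (E ≃ᵃ[ℝ] E) := {g | ∃ α ∈ D.Φ0, g = aRefl α 0}

/-- The set of translations `τ(μ)`, `μ ∈ Q∨`. -/
def trSet : Set (E ≃ᵃ[ℝ] E) := {g | ∃ μ ∈ D.Qv, g = tr μ}

/-- The finite Weyl group `W0`, generated by the reflections `s_α`. -/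
def W0 : Subgroup (E ≃ᵃ[ℝ] E) := Subgroup.closure D.reflSet

/-- The affine Weyl group `W = W0 ⋉ Q∨`. -/
def W : Subgroup (E ≃ᵃ[ℝ] E) := Subgroup.closure (D.reflSet ∪ D.trSet)

/-- The inversion set `Π(w) = Φ+ ∩ w⁻¹Φ−`. -/
def PiSet (w : E ≃ᵃ[ℝ] E) : Set (E × ℝ) :=
  {a | D.IsPosAff a ∧ ¬D.IsPosAff (wact w a)}

/-- The length function `ℓ(w) := #Π(w)`. -/
def len (w : E ≃ᵃ[ℝ] E) : ℕ := (D.PiSet w).ncard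

/-- The open fundamental alcove `C₊`. -/
def Cp : Set E := {y | ∀ α ∈ D.pos, 0 < ⟪α, y⟫_ℝ ∧ ⟪α, y⟫_ℝ < 1}

/-- The closed fundamental alcove `C̄₊`. -/
def Cbar : Set E := closure D.Cp

/-- The face `C^J` of `C̄₊` (for `J ⊊ {0,…,r}`). -/
def CJ (J : Set (Fin (D.r + 1))) : Set E :=
  {c | c ∈ D.Cbar ∧ ∀ j, aval (D.asimple j) c = 0 ↔ j ∈ J}

/-- The orbit `O_c = W·c`. -/
def Orb (c : E) : Set E := {y | ∃ w ∈ D.W, w c = y}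

/-- The unique point `c_y ∈ C̄₊` in the `W`-orbit of `y`. -/
def cpt (y : E) : E :=
  if h : ∃ c, c ∈ D.Cbar ∧ ∃ w ∈ D.W, w c = y then h.choose else 0

/-- The unique shortest element `w_y ∈ W` with `w_y · c_y = y`. -/
def wmin (y : E) : E ≃ᵃ[ℝ] E :=
  if h : ∃ w, (w ∈ D.W ∧ w (D.cpt y) = y) ∧
      ∀ u, u ∈ D.W → u (D.cpt y) = y → D.len w ≤ D.len u then
    h.choose
  else 1

/-- Reflections of the Coxeter system `(W, {s_0, …, s_r})`. -/
def IsCoxRefl (g : E ≃ᵃ[ℝ] E) : Prop := ∃ w ∈ D.W, ∃ j, g = w * D.sgen j * w⁻¹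

/-- A single step in the Bruhat order. -/
def bstep (u v : E ≃ᵃ[ℝ] E) : Prop :=
  (∃ g, D.IsCoxRefl g ∧ v = g * u) ∧ D.len u < D.len v

/-- The Bruhat order `≤_B` of `(W, {s_0, …, s_r})`. -/
def bruhatLE : (E ≃ᵃ[ℝ] E) → (E ≃ᵃ[ℝ] E) → Prop := Relation.ReflTransGen D.bstep

/-- The strict Bruhat order `<_B`. -/
def bruhatLT (u v : E ≃ᵃ[ℝ] E) : Prop := D.bruhatLE u v ∧ u ≠ v

/-- The parabolic Bruhat order `≤` on `E`: `y ≤ z` iff `y ∈ W·z` and `w_y ≤_B w_z`. -/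
def paraLE (y z : E) : Prop :=
  (∃ w ∈ D.W, w z = y) ∧ D.bruhatLE (D.wmin y) (D.wmin z)

/-- The strict parabolic Bruhat order `<` on `E`. -/
def paraLT (y z : E) : Prop := D.paraLE y z ∧ y ≠ z

/-- The relation `≺`, the transitive closure of the `≺_α` (`α ∈ Φ0+`). -/
def prec : E → E → Prop :=
  Relation.TransGen fun y z => ∃ α ∈ D.pos, precA α y z

/-- The relation `⪯`. -/
def precLE (y z : E) : Prop := D.prec y z ∨ y = z

/-- The parabolic subgroup `W_J` of `W`. -/
def WJ (J : Set (Fin (D.r + 1))) : Subgroup (E ≃ᵃ[ℝ] E) :=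
  Subgroup.closure {g | ∃ j ∈ J, g = D.sgen j}

/-- The set `W^J` of minimal-length representatives of the cosets `W/W_J`. -/
def WminJ (J : Set (Fin (D.r + 1))) : Set (E ≃ᵃ[ℝ] E) :=
  {w | w ∈ D.W ∧ ∀ u ∈ D.WJ J, D.len w ≤ D.len (w * u)}

/-- Dominant elements: `α(μ) ≥ 0` for all `α ∈ Φ0+`. -/
def IsDom (μ : E) : Prop := ∀ α ∈ D.pos, 0 ≤ ⟪α, μ⟫_ℝ

/-- `Π0(v) = Φ0+ ∩ v⁻¹Φ0−` for `v ∈ W0`. -/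
def Pi0 (v : E ≃ᵃ[ℝ] E) : Finset E := D.pos.filter fun α => -(v.linear α) ∈ D.pos

/-- `χ = χ₊ − χ₋ : Φ0 → {±1}`. -/
def chi (α : E) : ℤ := if α ∈ D.pos then 1 else -1

end Data

/-- The character `𝔰_y : μ ↦ ∏_{α ∈ Φ0+} k_α^{η(α(y))·α(μ)}` (evaluated at points `μ` where
all `α(μ)` are integers, e.g. on a lattice `Λ ∈ 𝓛`). -/
def sweight {F : Type*} [Field F] (D : Data E) (k : E → Fˣ) (y μ : E) : Fˣ :=
  ∏ α ∈ D.pos, k α ^ (eta ⟪α, y⟫_ℝ * ⌊⟪α, μ⟫_ℝ⌋)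

/-- The action of `w ∈ W` on characters of `Q∨`: for `w = τ(ν)v`,
`(w·t)(μ) = q^{⟪ν,μ⟫}·t(v⁻¹μ)`. -/
def charAct {F : Type*} [Field F] (q : Fˣ) (w : E ≃ᵃ[ℝ] E) (t : E → Fˣ) : E → Fˣ :=
  fun μ => q ^ ⌊⟪w 0, μ⟫_ℝ⌋ * t (w.linear.symm μ)

/-- `t` defines a multiplicative character of `Q∨`, i.e. an element of `T = Hom(Q∨, Fˣ)`. -/
def IsChar {F : Type*} [Field F] (D : Data E) (t : E → Fˣ) : Prop :=
  ∀ μ ∈ D.Qv, ∀ ν ∈ D.Qv, t (μ + ν) = t μ * t ν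

/-- `q_α := q^{2/‖α‖²}`. -/
def qroot {F : Type*} [Field F] (q : Fˣ) (α : E) : Fˣ := q ^ ⌊2 / ⟪α, α⟫_ℝ⌋

/-- Membership in `T_J`: `t ∈ T` with `t^{α_i∨} = 1` for `i ∈ J ∩ {1,…,r}`, and
`q_φ·t^{−φ∨} = 1` if `0 ∈ J`. -/
def InTJ {F : Type*} [Field F] (D : Data E) (q : Fˣ) (J : Set (Fin (D.r + 1)))
    (t : E → Fˣ) : Prop :=
  IsChar D t ∧ (∀ i : Fin D.r, i.succ ∈ J → t (cv (D.simple i)) = 1) ∧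
    ((0 : Fin (D.r + 1)) ∈ J → qroot q D.hroot * t (-cv D.hroot) = 1)

/-- `κ_v(y) = ∏_{α ∈ Π0(v)} k_α^{−η(α(y))}`. -/
def kappa {F : Type*} [Field F] (D : Data E) (k : E → Fˣ) (v : E ≃ᵃ[ℝ] E) (y : E) : Fˣ :=
  ∏ α ∈ D.Pi0 v, k α ^ (-eta ⟪α, y⟫_ℝ)

/-- The (quasi-)monomial `x^y`, as an element of `⊕_{z ∈ E} F x^z`. -/
def xmono (F : Type*) [Field F] (y : E) : E →₀ F := Finsupp.single y 1

/-- The multiplication operator `π(x^μ) : x^y ↦ x^{y+μ}`. -/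
def xop (F : Type*) [Field F] (μ : E) : Module.End F (E →₀ F) :=
  Finsupp.lmapDomain F F (· + μ)

/-- The truncated divided difference `∇_i(x^y)` in its explicit form: with `n = ⌊α(y)⌋`,
`−(x^{y−α∨} + ⋯ + x^{y−nα∨})` if `n ≥ 1`, `0` if `n = 0`, and
`x^y + x^{y+α∨} + ⋯ + x^{y+(−n−1)α∨}` if `n ≤ −1`. -/
def nablaS (F : Type*) [Field F] (α y : E) : E →₀ F :=
  if 1 ≤ ⌊⟪α, y⟫_ℝ⌋ then
    -∑ s ∈ Finset.Icc (1 : ℤ) ⌊⟪α, y⟫_ℝ⌋, Finsupp.single (y - (s : ℝ) • cv α) (1 : F)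
  else
    ∑ s ∈ Finset.Icc (0 : ℤ) (-⌊⟪α, y⟫_ℝ⌋ - 1), Finsupp.single (y + (s : ℝ) • cv α) (1 : F)

/-- The truncated divided difference `∇_0(x^y)` in its explicit form: with `n = ⌊−φ(y)⌋`,
`−(q_φ^{−1}x^{y+φ∨} + ⋯ + q_φ^{−n}x^{y+nφ∨})` if `n ≥ 1`, `0` if `n = 0`, and
`x^y + q_φ x^{y−φ∨} + ⋯ + q_φ^{−n−1}x^{y+(n+1)φ∨}` if `n ≤ −1`. -/
def nabla0 {F : Type*} [Field F] (D : Data E) (q : Fˣ) (y : E) : E →₀ F :=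
  if 1 ≤ ⌊-⟪D.hroot, y⟫_ℝ⌋ then
    -∑ s ∈ Finset.Icc (1 : ℤ) ⌊-⟪D.hroot, y⟫_ℝ⌋,
      (((qroot q D.hroot : Fˣ) : F) ^ (-s)) • Finsupp.single (y + (s : ℝ) • cv D.hroot) (1 : F)
  else
    ∑ s ∈ Finset.Icc (0 : ℤ) (-⌊-⟪D.hroot, y⟫_ℝ⌋ - 1),
      (((qroot q D.hroot : Fˣ) : F) ^ s) • Finsupp.single (y - (s : ℝ) • cv D.hroot) (1 : F)

/-- `k_j := k_{α_j}` (`0 ≤ j ≤ r`), with `k_0 = k_φ`. -/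
def kgen {F : Type*} [Field F] (D : Data E) (k : E → Fˣ) : Fin (D.r + 1) → Fˣ :=
  Fin.cases (k D.hroot) fun i => k (D.simple i)

/-- The image of the monomial `x^y` under the truncated Demazure–Lusztig operator `π(T_j)`:
`π(T_i)x^y = k_i^{χ_ℤ(α_i(y))}x^{s_i y} + (k_i − k_i^{−1})∇_i(x^y)` for `1 ≤ i ≤ r`, and
`π(T_0)x^y = k_0^{χ_ℤ(α_0(y))}𝔱_y^{φ∨}x^{s_φ y} + (k_0 − k_0^{−1})∇_0(x^y)`. -/
def Tfun {F : Type*} [Field F] (D : Data E) (q : Fˣ) (k t : E → Fˣ) :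
    Fin (D.r + 1) → E → E →₀ F :=
  Fin.cases
    (fun y =>
      ((if ∃ n : ℤ, aval (D.asimple 0) y = (n : ℝ) then ((k D.hroot : Fˣ) : F) else 1) *
          ((charAct q (D.wmin y) t (cv D.hroot) : Fˣ) : F)) •
          Finsupp.single (aRefl D.hroot 0 y) (1 : F) +
        (((k D.hroot : Fˣ) : F) - (((k D.hroot)⁻¹ : Fˣ) : F)) • nabla0 D q y)
    fun i y =>
      (if ∃ n : ℤ, ⟪D.simple i, y⟫_ℝ = (n : ℝ) then ((k (D.simple i) : Fˣ) : F) else 1) •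
          Finsupp.single (aRefl (D.simple i) 0 y) (1 : F) +
        (((k (D.simple i) : Fˣ) : F) - (((k (D.simple i))⁻¹ : Fˣ) : F)) • nablaS F (D.simple i) y

/-- The truncated Demazure–Lusztig operator `π(T_j)` on `⊕_{y ∈ E} F x^y`. -/
def Top {F : Type*} [Field F] (D : Data E) (q : Fˣ) (k t : E → Fˣ) (j : Fin (D.r + 1)) :
    Module.End F (E →₀ F) :=
  Finsupp.linearCombination F (Tfun D q k t j)

/-- `π(((1 − x^{−α(μ)α∨})/(1 − x^{α∨}))·x^μ)` applied to `x^y`: the finite geometric sum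
appearing in the cross relation for `T_i`. -/
def crossS (F : Type*) [Field F] (α μ y : E) : E →₀ F :=
  if 1 ≤ ⌊⟪α, μ⟫_ℝ⌋ then
    -∑ s ∈ Finset.Icc (1 : ℤ) ⌊⟪α, μ⟫_ℝ⌋, Finsupp.single (y + μ - (s : ℝ) • cv α) (1 : F)
  else
    ∑ s ∈ Finset.Icc (0 : ℤ) (-⌊⟪α, μ⟫_ℝ⌋ - 1), Finsupp.single (y + μ + (s : ℝ) • cv α) (1 : F)

/-- `π(((1 − (q_φ x^{−φ∨})^{φ(μ)})/(1 − q_φ x^{−φ∨}))·x^μ)` applied to `x^y`: the finite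
geometric sum appearing in the cross relation for `T_0`. -/
def cross0 {F : Type*} [Field F] (D : Data E) (q : Fˣ) (μ y : E) : E →₀ F :=
  if 0 ≤ ⌊⟪D.hroot, μ⟫_ℝ⌋ then
    ∑ s ∈ Finset.Icc (0 : ℤ) (⌊⟪D.hroot, μ⟫_ℝ⌋ - 1),
      (((qroot q D.hroot : Fˣ) : F) ^ s) • Finsupp.single (y + μ - (s : ℝ) • cv D.hroot) (1 : F)
  else
    -∑ s ∈ Finset.Icc (1 : ℤ) (-⌊⟪D.hroot, μ⟫_ℝ⌋),
      (((qroot q D.hroot : Fˣ) : F) ^ (-s)) • Finsupp.single (y + μ + (s : ℝ) • cv D.hroot) (1 : F)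

/-- The quasi-monomial `x^y` in the model `Q^{(c)} ⊆ (E → Q)` of `Q ⊗_P P^{(c)}`:
`x^y` is the function `z ↦ x^{y−z}` supported on `y + Q∨`. -/
def xiQ {Q : Type*} [Field Q] (D : Data E) (mono : E → Q) (y : E) : E → Q :=
  fun z => if z - y ∈ D.Qv then mono (y - z) else 0

/-- Membership in the model `Q^{(c)} ⊆ (E → Q)` of `Q ⊗_P P^{(c)}`: functions supported on
`O_c` satisfying the covariance `ξ(z + ν) = x^{−ν}·ξ(z)` (`ν ∈ Q∨`). -/
def IsQc {Q : Type*} [Field Q] (D : Data E) (mono : E → Q) (c : E) (ξ : E → Q) : Prop :=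
  (∀ z, z ∉ D.Orb c → ξ z = 0) ∧
    ∀ z ∈ D.Orb c, ∀ ν ∈ D.Qv, ξ (z + ν) = (mono ν)⁻¹ * ξ z

/-- `x^{α_0∨} = q_φ x^{−φ∨}` as an element of `Q`. -/
def xroot0 {F Q : Type*} [Field F] [Field Q] (D : Data E) (ι : F →+* Q) (q : Fˣ)
    (mono : E → Q) : Q :=
  ι ((qroot q D.hroot : Fˣ) : F) * mono (-cv D.hroot)

/-- The right-hand side of the defining formula for `σ(s_j)(x^y)`:
`(k_j^{χ_ℤ(α_j(y))}(x^{α_j∨} − 1)/(k_j x^{α_j∨} − k_j^{−1}))·s_{j,𝔱}x^y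
 + ((k_j − k_j^{−1})/(k_j x^{α_j∨} − k_j^{−1}))·x^{y − ⌊Dα_j(y)⌋α_j∨}`. -/
def sigmaFormula {F Q : Type*} [Field F] [Field Q] (D : Data E) (ι : F →+* Q) (q : Fˣ)
    (k t : E → Fˣ) (mono : E → Q) : Fin (D.r + 1) → E → E → Q :=
  Fin.cases
    (fun y =>
      (((if ∃ n : ℤ, aval (D.asimple 0) y = (n : ℝ) then ι ((k D.hroot : Fˣ) : F) else 1) *
            (xroot0 D ι q mono - 1)) /
          (ι ((k D.hroot : Fˣ) : F) * xroot0 D ι q mono - ι (((k D.hroot)⁻¹ : Fˣ) : F))) •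
          (ι ((charAct q (D.wmin y) t (cv D.hroot) : Fˣ) : F) •
            xiQ D mono (aRefl D.hroot 0 y)) +
        ((ι ((k D.hroot : Fˣ) : F) - ι (((k D.hroot)⁻¹ : Fˣ) : F)) /
          (ι ((k D.hroot : Fˣ) : F) * xroot0 D ι q mono - ι (((k D.hroot)⁻¹ : Fˣ) : F))) •
          (ι (((qroot q D.hroot ^ (-⌊-⟪D.hroot, y⟫_ℝ⌋) : Fˣ) : F)) •
            xiQ D mono (y + (⌊-⟪D.hroot, y⟫_ℝ⌋ : ℝ) • cv D.hroot)))
    fun i y =>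
      (((if ∃ n : ℤ, ⟪D.simple i, y⟫_ℝ = (n : ℝ) then ι ((k (D.simple i) : Fˣ) : F) else 1) *
            (mono (cv (D.simple i)) - 1)) /
          (ι ((k (D.simple i) : Fˣ) : F) * mono (cv (D.simple i)) -
            ι (((k (D.simple i))⁻¹ : Fˣ) : F))) •
          xiQ D mono (aRefl (D.simple i) 0 y) +
        ((ι ((k (D.simple i) : Fˣ) : F) - ι (((k (D.simple i))⁻¹ : Fˣ) : F)) /
          (ι ((k (D.simple i) : Fˣ) : F) * mono (cv (D.simple i)) -
            ι (((k (D.simple i))⁻¹ : Fˣ) : F))) •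
          xiQ D mono (y - (⌊⟪D.simple i, y⟫_ℝ⌋ : ℝ) • cv (D.simple i))

end SSV

/-!
The operator `F y = ∑_{α ∈ Φ0+} α(y)·α∨` is symmetric and commutes with every reflection `s_β`
(because `2F y = ∑_{α ∈ Φ0} α(y)·α∨` and `s_β` permutes `Φ0`). Hence `s_β (F β∨) = -F β∨`, so
`F β∨` is a multiple `c_β·β∨`; symmetry of `F` gives `c_β = c_γ` whenever `⟪β, γ⟫ ≠ 0`, and
irreducibility makes `c_β` a constant `c`. Since `F` vanishes on `E′ᗮ`, `F = c·pr_{E′}`, and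
comparing traces (`tr F = ∑_{α > 0} α(α∨) = #Φ0`, `tr pr_{E′} = r`) gives `c = #Φ0 / r = h`.

For the lattice statement, `h·λ = F λ ∈ Q∨` as soon as all `α(λ)` are integers. The Coxeter
number is itself an integer: in rank `≥ 2` some root `γ` has `⟪γ, φ∨⟫ = 1`, and then
`h = ⟪γ, F φ∨⟫ = ∑_{α > 0} α(φ∨)·γ(α∨) ∈ ℤ`.
-/

namespace SSV

section Coroots

variable {E : Type*} [NormedAddCommGroup E] [InnerProductSpace ℝ E]

lemma inner_cv_left (α y : E) : ⟪cv α, y⟫_ℝ = 2 / ⟪α, α⟫_ℝ * ⟪α, y⟫_ℝ := by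
  simp [cv, real_inner_smul_left]

lemma inner_cv_right (α y : E) : ⟪y, cv α⟫_ℝ = 2 / ⟪α, α⟫_ℝ * ⟪α, y⟫_ℝ := by
  rw [real_inner_comm, inner_cv_left]

lemma inner_cv_self {α : E} (hα : α ≠ 0) : ⟪α, cv α⟫_ℝ = 2 := by
  rw [real_inner_comm, inner_cv_left]
  field_simp [inner_self_ne_zero.mpr hα]

lemma cv_neg (α : E) : cv (-α) = -cv α := by
  simp [cv]

lemma span_image_cv (s : Set E) : Submodule.span ℝ (cv '' s) = Submodule.span ℝ s := by
  refine le_antisymm (Submodule.span_le.mpr ?_) (Submodule.span_le.mpr fun α hα => ?_)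
  · rintro _ ⟨α, hα, rfl⟩
    exact Submodule.smul_mem _ _ (Submodule.subset_span hα)
  · rcases eq_or_ne α 0 with rfl | h
    · exact zero_mem _
    · have h2 : ⟪α, α⟫_ℝ ≠ 0 := inner_self_ne_zero.mpr h
      have : α = (⟪α, α⟫_ℝ / 2) • cv α := by
        rw [cv, smul_smul, show ⟪α, α⟫_ℝ / 2 * (2 / ⟪α, α⟫_ℝ) = 1 by field_simp, one_smul]
      rw [this]
      exact Submodule.smul_mem _ _ (Submodule.subset_span ⟨α, hα, rfl⟩)

lemma lrefl_apply (α y : E) : lrefl α y = y - ⟪α, y⟫_ℝ • cv α := by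
  by_cases h : ⟪α, α⟫_ℝ = 0
  · simp [lrefl, inner_self_eq_zero.mp h, cv]
  · simp only [lrefl, h, dite_false, Module.reflection_apply, rootForm, LinearMap.coe_mk,
      AddHom.coe_mk, cv, smul_smul, mul_comm]

lemma aRefl_zero_apply (α y : E) : aRefl α 0 y = lrefl α y := by
  simp [aRefl]

lemma inner_lrefl_left (α x y : E) : ⟪lrefl α x, y⟫_ℝ = ⟪x, lrefl α y⟫_ℝ := by
  simp only [lrefl_apply, inner_sub_left, inner_sub_right, real_inner_smul_left,
    real_inner_smul_right, inner_cv_left, inner_cv_right, real_inner_comm x α]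
  ring

lemma lrefl_lrefl (α y : E) : lrefl α (lrefl α y) = y := by
  rcases eq_or_ne α 0 with rfl | h
  · simp [lrefl_apply, cv]
  · rw [lrefl_apply, lrefl_apply α y, inner_sub_right, real_inner_smul_right, inner_cv_self h]
    module

lemma cv_lrefl (α γ : E) : cv (lrefl α γ) = lrefl α (cv γ) := by
  rw [cv, cv, inner_lrefl_left, lrefl_lrefl, map_smul]

lemma lrefl_cv_self (α : E) : lrefl α (cv α) = -cv α := by
  rcases eq_or_ne α 0 with rfl | h
  · simp [cv]
  · rw [lrefl_apply, inner_cv_self h]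
    module

lemma eq_smul_cv_of_lrefl_eq_neg {α v : E} (h : lrefl α v = -v) :
    v = (⟪α, v⟫_ℝ / 2) • cv α := by
  rw [lrefl_apply] at h
  have : (2 : ℝ) • v = ⟪α, v⟫_ℝ • cv α := by
    rw [two_smul]; nth_rewrite 1 [← neg_neg v, ← h]; abel
  rw [div_eq_inv_mul, mul_smul, ← this, smul_smul, inv_mul_cancel₀ two_ne_zero, one_smul]

lemma inner_cv_sq_lt_four {β γ : E} (hβ : β ≠ 0) (hγ : ∀ c : ℝ, γ ≠ c • β)
    (hle : ⟪γ, γ⟫_ℝ ≤ ⟪β, β⟫_ℝ) : ⟪γ, cv β⟫_ℝ ^ 2 < 4 := by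
  have hcs : ⟪β, γ⟫_ℝ ^ 2 < ⟪β, β⟫_ℝ * ⟪γ, γ⟫_ℝ := by
    have hne : |⟪β, γ⟫_ℝ| ≠ ‖β‖ * ‖γ‖ := fun h => by
      have key : ‖⟪β, γ⟫_ℝ‖ = ‖β‖ * ‖γ‖ → β = 0 ∨ ∃ c : ℝ, γ = c • β :=
        ((norm_inner_eq_norm_tfae ℝ β γ).out 0 2).mp
      obtain ⟨c, rfl⟩ := (key (by rwa [Real.norm_eq_abs])).resolve_left hβ
      exact hγ c rfl
    have := (abs_real_inner_le_norm β γ).lt_of_ne hne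
    rw [real_inner_self_eq_norm_sq, real_inner_self_eq_norm_sq, ← sq_abs]
    nlinarith [abs_nonneg ⟪β, γ⟫_ℝ]
  have hβpos : 0 < ⟪β, β⟫_ℝ := real_inner_self_pos.mpr hβ
  rw [real_inner_comm, inner_cv_left, mul_pow, div_pow, div_mul_eq_mul_div,
    div_lt_iff₀ (by positivity)]
  nlinarith

lemma trace_starProjection [FiniteDimensional ℝ E] (K : Submodule ℝ E)
    [K.HasOrthogonalProjection] :
    LinearMap.trace ℝ E K.starProjection = Module.finrank ℝ K :=
  LinearMap.IsProj.trace ⟨K.starProjection_apply_mem, fun _ => K.starProjection_eq_self_iff.mpr⟩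

end Coroots

namespace Data

variable {E : Type*} [NormedAddCommGroup E] [InnerProductSpace ℝ E] (D : Data E)

def corootSum : E →ₗ[ℝ] E := ∑ α ∈ D.pos, (innerₛₗ ℝ α).smulRight (cv α)

lemma corootSum_apply (y : E) : D.corootSum y = ∑ α ∈ D.pos, ⟪α, y⟫_ℝ • cv α := by
  simp [corootSum]

lemma lrefl_mem {β γ : E} (hβ : β ∈ D.Φ0) (hγ : γ ∈ D.Φ0) : lrefl β γ ∈ D.Φ0 := by
  simpa only [aRefl_zero_apply] using D.root_refl_mem β hβ γ hγ

lemma hroot_mem : D.hroot ∈ D.Φ0 := D.pos_subset D.hroot_mem_pos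

lemma eq_pos_union_neg : D.Φ0 = D.pos ∪ D.pos.map (Equiv.neg E).toEmbedding := by
  ext α
  simp only [Finset.mem_union, Finset.mem_map_equiv, Equiv.neg_symm, Equiv.neg_apply]
  refine ⟨fun hα => (D.pos_dichotomy α hα).imp (·.1) (·.2), ?_⟩
  rintro (h | h)
  · exact D.pos_subset h
  · simpa using D.root_neg_mem _ (D.pos_subset h)

lemma disjoint_pos_neg : Disjoint D.pos (D.pos.map (Equiv.neg E).toEmbedding) := by
  refine Finset.disjoint_left.mpr fun α hα hα' => ?_
  simp only [Finset.mem_map_equiv, Equiv.neg_symm, Equiv.neg_apply] at hα'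
  rcases D.pos_dichotomy α (D.pos_subset hα) with h | h
  · exact h.2 hα'
  · exact h.1 hα

lemma card_eq_two_mul : D.Φ0.card = 2 * D.pos.card := by
  rw [D.eq_pos_union_neg, Finset.card_union_of_disjoint D.disjoint_pos_neg, Finset.card_map,
    two_mul]

lemma sum_root_smul_cv (y : E) :
    ∑ α ∈ D.Φ0, ⟪α, y⟫_ℝ • cv α = (2 : ℝ) • D.corootSum y := by
  rw [D.eq_pos_union_neg, Finset.sum_union D.disjoint_pos_neg, Finset.sum_map, corootSum_apply,
    two_smul]
  simp [cv_neg]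

lemma corootSum_lrefl {β : E} (hβ : β ∈ D.Φ0) (y : E) :
    D.corootSum (lrefl β y) = lrefl β (D.corootSum y) := by
  refine (smul_right_injective E (two_ne_zero (α := ℝ))) ?_
  dsimp only
  rw [← sum_root_smul_cv, ← map_smul (lrefl β), ← sum_root_smul_cv, map_sum]
  refine Finset.sum_nbij' (lrefl β) (lrefl β) (fun α hα => D.lrefl_mem hβ hα)
    (fun α hα => D.lrefl_mem hβ hα) (fun α _ => lrefl_lrefl β α) (fun α _ => lrefl_lrefl β α)
    fun α _ => ?_
  rw [map_smul, ← cv_lrefl, lrefl_lrefl, inner_lrefl_left]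

lemma isSymmetric_corootSum : D.corootSum.IsSymmetric := fun y z => by
  simp only [corootSum_apply, sum_inner, inner_sum, real_inner_smul_left, real_inner_smul_right,
    inner_cv_left, inner_cv_right]
  exact Finset.sum_congr rfl fun α _ => by ring

lemma corootSum_cv {β : E} (hβ : β ∈ D.Φ0) :
    D.corootSum (cv β) = (⟪β, D.corootSum (cv β)⟫_ℝ / 2) • cv β :=
  eq_smul_cv_of_lrefl_eq_neg (by rw [← D.corootSum_lrefl hβ, lrefl_cv_self, map_neg])

lemma apply_eq_apply_of_inner_ne_zero {X : Type*} (f : E → X)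
    (hf : ∀ β ∈ D.Φ0, ∀ γ ∈ D.Φ0, ⟪β, γ⟫_ℝ ≠ 0 → f β = f γ) {β γ : E} (hβ : β ∈ D.Φ0)
    (hγ : γ ∈ D.Φ0) : f β = f γ := by
  by_contra hne
  refine D.root_irred {a | a ∈ D.Φ0 ∧ f a = f β} {a | a ∈ D.Φ0 ∧ f a ≠ f β} ?_
    ⟨β, hβ, rfl⟩ ⟨γ, hγ, Ne.symm hne⟩ fun a ha b hb => ?_
  · ext a
    simp only [Set.mem_union, Set.mem_ofPred_eq, Finset.mem_coe]
    tauto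
  · by_contra hab
    exact hb.2 ((hf b hb.1 a ha.1 fun h => hab (by rw [real_inner_comm, h])).trans ha.2)

lemma exists_corootSum_cv_eq_smul : ∃ c : ℝ, ∀ β ∈ D.Φ0, D.corootSum (cv β) = c • cv β := by
  set e : E → ℝ := fun β => ⟪β, D.corootSum (cv β)⟫_ℝ / 2
  have he : ∀ β ∈ D.Φ0, ∀ γ ∈ D.Φ0, ⟪β, γ⟫_ℝ ≠ 0 → e β = e γ := fun β hβ γ hγ hβγ => by
    have hsymm := D.isSymmetric_corootSum (cv β) (cv γ)
    rw [D.corootSum_cv hβ, D.corootSum_cv hγ, real_inner_smul_left,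
      real_inner_smul_right] at hsymm
    refine mul_right_cancel₀ ?_ hsymm
    rw [inner_cv_left, inner_cv_right, real_inner_comm β γ]
    exact mul_ne_zero (div_ne_zero two_ne_zero (inner_self_ne_zero.mpr (D.root_ne_zero β hβ)))
      (mul_ne_zero (div_ne_zero two_ne_zero (inner_self_ne_zero.mpr (D.root_ne_zero γ hγ))) hβγ)
  exact ⟨e D.hroot, fun β hβ => by
    rw [D.corootSum_cv hβ]
    exact congrArg (· • cv β) (D.apply_eq_apply_of_inner_ne_zero e he hβ D.hroot_mem)⟩

abbrev corootSpan : Submodule ℝ E := Submodule.span ℝ (cv '' (D.Φ0 : Set E))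

lemma root_mem_corootSpan {α : E} (hα : α ∈ D.Φ0) : α ∈ D.corootSpan := by
  rw [corootSpan, span_image_cv]
  exact Submodule.subset_span hα

lemma corootSum_eq_smul_starProjection [D.corootSpan.HasOrthogonalProjection] {c : ℝ}
    (hc : ∀ β ∈ D.Φ0, D.corootSum (cv β) = c • cv β) (y : E) :
    D.corootSum y = c • D.corootSpan.starProjection y := by
  have hspan : ∀ x ∈ D.corootSpan, D.corootSum x = c • x := fun x hx =>
    LinearMap.eqOn_span (f := D.corootSum) (g := c • LinearMap.id)
      (by rintro _ ⟨β, hβ, rfl⟩; exact hc β hβ) hx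
  have horth : D.corootSum (y - D.corootSpan.starProjection y) = 0 := by
    rw [corootSum_apply]
    refine Finset.sum_eq_zero fun α hα => ?_
    rw [Submodule.inner_right_of_mem_orthogonal (D.root_mem_corootSpan (D.pos_subset hα))
      (D.corootSpan.sub_starProjection_mem_orthogonal y), zero_smul]
  calc D.corootSum y
      = D.corootSum (D.corootSpan.starProjection y) +
          D.corootSum (y - D.corootSpan.starProjection y) := by rw [← map_add, add_sub_cancel]
    _ = c • D.corootSpan.starProjection y := by
      rw [hspan _ (Submodule.starProjection_apply_mem _ _), horth, add_zero]

lemma span_roots : Submodule.span ℝ (D.Φ0 : Set E) = Submodule.span ℝ (Set.range D.simple) := by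
  have hpos : ∀ α ∈ D.pos, α ∈ Submodule.span ℝ (Set.range D.simple) := fun α hα => by
    obtain ⟨n, rfl⟩ := D.pos_nat_comb α hα
    exact Submodule.sum_mem _ fun i _ => Submodule.smul_mem _ _ (Submodule.subset_span ⟨i, rfl⟩)
  refine le_antisymm (Submodule.span_le.mpr fun α hα => ?_)
    (Submodule.span_mono (Set.range_subset_iff.mpr fun i => D.pos_subset (D.simple_mem_pos i)))
  rcases D.pos_dichotomy α hα with h | h
  · exact hpos α h.1
  · simpa using Submodule.neg_mem _ (hpos (-α) h.2)

lemma finrank_span_roots : Module.finrank ℝ (Submodule.span ℝ (D.Φ0 : Set E)) = D.r := by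
  rw [span_roots, finrank_span_eq_card D.simple_indep, Fintype.card_fin]

lemma trace_corootSum [FiniteDimensional ℝ E] :
    LinearMap.trace ℝ E D.corootSum = D.Φ0.card := by
  have h : ∀ α ∈ D.pos, ⟪α, cv α⟫_ℝ = 2 := fun α hα =>
    inner_cv_self (D.root_ne_zero α (D.pos_subset hα))
  simp only [corootSum, map_sum, LinearMap.trace_smulRight, innerₛₗ_apply_apply]
  rw [Finset.sum_congr rfl h, Finset.sum_const, card_eq_two_mul]
  push_cast
  ring

lemma corootSum_eq [FiniteDimensional ℝ E] (y : E) :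
    D.corootSum y = ((D.Φ0.card : ℝ) / D.r) • D.corootSpan.starProjection y := by
  obtain ⟨c, hc⟩ := D.exists_corootSum_cv_eq_smul
  have hF : D.corootSum = c • (D.corootSpan.starProjection : E →ₗ[ℝ] E) :=
    LinearMap.ext (D.corootSum_eq_smul_starProjection hc)
  have htrace := congrArg (LinearMap.trace ℝ E) hF
  rw [trace_corootSum, map_smul, trace_starProjection, corootSpan, span_image_cv,
    finrank_span_roots, smul_eq_mul] at htrace
  rw [htrace, mul_div_cancel_right₀ _ (Nat.cast_ne_zero.mpr D.r_pos.ne')]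
  exact D.corootSum_eq_smul_starProjection hc y

lemma corootSum_eq_smul_of_mem [FiniteDimensional ℝ E] {y : E} (hy : y ∈ D.corootSpan) :
    D.corootSum y = ((D.Φ0.card : ℝ) / D.r) • y := by
  rw [corootSum_eq, Submodule.starProjection_eq_self_iff.mpr hy]

lemma exists_inner_eq_intCast_of_mem_Qv {γ μ : E} (hγ : γ ∈ D.Φ0) (hμ : μ ∈ D.Qv) :
    ∃ n : ℤ, ⟪γ, μ⟫_ℝ = n := by
  induction hμ using AddSubgroup.closure_induction with
  | mem x hx =>
    obtain ⟨β, hβ, rfl⟩ := hx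
    obtain ⟨n, hn⟩ := D.root_crystal γ hγ β hβ
    exact ⟨n, by rw [real_inner_comm, hn]⟩
  | zero => exact ⟨0, by simp⟩
  | add x y _ _ hx hy =>
    obtain ⟨a, ha⟩ := hx
    obtain ⟨b, hb⟩ := hy
    exact ⟨a + b, by rw [inner_add_right, ha, hb, Int.cast_add]⟩
  | neg x _ hx =>
    obtain ⟨a, ha⟩ := hx
    exact ⟨-a, by rw [inner_neg_right, ha, Int.cast_neg]⟩

lemma corootSum_mem_Qv {y : E} (hy : ∀ α ∈ D.Φ0, ∃ n : ℤ, ⟪α, y⟫_ℝ = n) :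
    D.corootSum y ∈ D.Qv := by
  rw [corootSum_apply]
  refine AddSubgroup.sum_mem _ fun α hα => ?_
  obtain ⟨n, hn⟩ := hy α (D.pos_subset hα)
  rw [hn, Int.cast_smul_eq_zsmul]
  exact AddSubgroup.zsmul_mem _
    (AddSubgroup.subset_closure (Set.mem_image_of_mem cv (D.pos_subset hα))) n

lemma ne_smul_of_ne {β γ : E} (hβ : β ∈ D.Φ0) (hγ : γ ∈ D.Φ0) (h₁ : γ ≠ β) (h₂ : γ ≠ -β)
    (c : ℝ) : γ ≠ c • β := by
  rintro rfl
  rcases D.root_reduced β hβ c hγ with rfl | rfl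
  · exact h₁ (one_smul ℝ β)
  · exact h₂ (neg_one_smul ℝ β)

lemma exists_root_inner_ne_zero (hr : 2 ≤ D.r) {β : E} (hβ : β ∈ D.Φ0) :
    ∃ γ ∈ D.Φ0, γ ≠ β ∧ γ ≠ -β ∧ ⟪β, γ⟫_ℝ ≠ 0 := by
  have hB : ((D.Φ0 : Set E) \ {β, -β}).Nonempty := by
    by_contra hB
    rw [Set.not_nonempty_iff_eq_empty, Set.sdiff_eq_empty] at hB
    have hle : Submodule.span ℝ (D.Φ0 : Set E) ≤ ℝ ∙ β := Submodule.span_le.mpr fun α hα => by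
      rcases hB hα with rfl | rfl
      · exact Submodule.mem_span_singleton_self α
      · exact Submodule.neg_mem _ (Submodule.mem_span_singleton_self β)
    have := Submodule.finrank_mono hle
    rw [finrank_span_roots, finrank_span_singleton (D.root_ne_zero β hβ)] at this
    omega
  by_contra! h
  refine D.root_irred ((D.Φ0 : Set E) ∩ {β, -β}) ((D.Φ0 : Set E) \ {β, -β})
    (Set.inter_union_sdiff _ _).symm ⟨β, hβ, Or.inl rfl⟩ hB ?_
  rintro a ⟨-, ha⟩ b ⟨hb, hb'⟩
  simp only [Set.mem_insert_iff, Set.mem_singleton_iff, not_or] at hb'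
  rcases ha with rfl | rfl
  · exact h b hb hb'.1 hb'.2
  · rw [inner_neg_left, h b hb hb'.1 hb'.2, neg_zero]

/-- The highest root is long, so its coroot pairs with any root not proportional to it to
`0` or `±1`. -/
lemma exists_inner_cv_hroot_eq_one (hr : 2 ≤ D.r) : ∃ γ ∈ D.Φ0, ⟪γ, cv D.hroot⟫_ℝ = 1 := by
  obtain ⟨γ, hγ, h₁, h₂, hne⟩ := D.exists_root_inner_ne_zero hr D.hroot_mem
  obtain ⟨n, hn⟩ := D.root_crystal γ hγ D.hroot D.hroot_mem
  rw [real_inner_comm] at hn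
  have hsq : (n : ℝ) ^ 2 < 4 := hn ▸ inner_cv_sq_lt_four (D.root_ne_zero _ D.hroot_mem)
    (D.ne_smul_of_ne D.hroot_mem hγ h₁ h₂) (D.hroot_long ▸ D.root_norm_le γ hγ)
  have hn0 : (n : ℝ) ≠ 0 := by
    rw [← hn, inner_cv_right]
    exact mul_ne_zero (div_ne_zero two_ne_zero (inner_self_ne_zero.mpr
      (D.root_ne_zero _ D.hroot_mem))) hne
  have hsq' : n ^ 2 < 4 := by exact_mod_cast hsq
  have hn0' : n ≠ 0 := by exact_mod_cast hn0
  have : n = 1 ∨ n = -1 := by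
    have : -2 < n := by nlinarith
    have : n < 2 := by nlinarith
    omega
  rcases this with rfl | rfl
  · exact ⟨γ, hγ, by rw [hn, Int.cast_one]⟩
  · exact ⟨-γ, D.root_neg_mem γ hγ, by rw [inner_neg_left, hn]; norm_num⟩

lemma r_dvd_card [FiniteDimensional ℝ E] : D.r ∣ D.Φ0.card := by
  rcases lt_or_ge D.r 2 with hr | hr
  · rw [show D.r = 1 by have := D.r_pos; omega]
    exact one_dvd _
  obtain ⟨γ, hγ, hγ1⟩ := D.exists_inner_cv_hroot_eq_one hr
  have hmem : D.corootSum (cv D.hroot) ∈ D.Qv := D.corootSum_mem_Qv fun α hα => by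
    obtain ⟨n, hn⟩ := D.root_crystal α hα D.hroot D.hroot_mem
    exact ⟨n, by rw [real_inner_comm, hn]⟩
  obtain ⟨k, hk⟩ := D.exists_inner_eq_intCast_of_mem_Qv hγ hmem
  rw [D.corootSum_eq_smul_of_mem (Submodule.subset_span ⟨_, D.hroot_mem, rfl⟩),
    real_inner_smul_right, hγ1, mul_one, div_eq_iff (Nat.cast_ne_zero.mpr D.r_pos.ne')] at hk
  exact Int.natCast_dvd_natCast.mp ⟨k, by exact_mod_cast hk.trans (mul_comm _ _)⟩

end Data

end SSV

/-- with `h = #Φ0/r` the Coxeter number and `E′` the span of the coroots,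
`(1/h)·∑_{α ∈ Φ0+} α(y)·α∨ = pr_{E′}(y)` for all `y ∈ E`; in particular the coweight
lattice `P∨` satisfies `P∨ ⊆ (1/h)·Q∨`. -/
theorem statement7
    {E : Type*} [NormedAddCommGroup E] [InnerProductSpace ℝ E] [FiniteDimensional ℝ E]
    (D : SSV.Data E) :
    (∀ y : E, (1 / ((D.Φ0.card : ℝ) / (D.r : ℝ))) • ∑ α ∈ D.pos, ⟪α, y⟫_ℝ • SSV.cv α =
      (Submodule.orthogonalProjectionOnto (Submodule.span ℝ (SSV.cv '' (D.Φ0 : Set E))) y : E)) ∧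
    ∀ lam : E, lam ∈ Submodule.span ℝ (SSV.cv '' (D.Φ0 : Set E)) →
      (∀ α ∈ D.Φ0, ∃ n : ℤ, ⟪α, lam⟫_ℝ = (n : ℝ)) →
      (D.Φ0.card / D.r) • lam ∈ D.Qv := by
  have hr : (D.r : ℝ) ≠ 0 := Nat.cast_ne_zero.mpr D.r_pos.ne'
  refine ⟨fun y => ?_, fun lam hlam hint => ?_⟩
  · have hcard : (D.Φ0.card : ℝ) ≠ 0 :=
      Nat.cast_ne_zero.mpr (Finset.card_ne_zero_of_mem D.hroot_mem)
    rw [← D.corootSum_apply, D.corootSum_eq, smul_smul, one_div_mul_cancel (div_ne_zero hcard hr),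
      one_smul, Submodule.starProjection_apply]
  · obtain ⟨k, hk⟩ := D.r_dvd_card
    have hk' : (D.Φ0.card : ℝ) / D.r = k := by rw [hk, Nat.cast_mul, mul_div_cancel_left₀ _ hr]
    rw [hk, Nat.mul_div_cancel_left _ D.r_pos, ← Nat.cast_smul_eq_nsmul ℝ, ← hk',
      ← D.corootSum_eq_smul_of_mem hlam]
    exact D.corootSum_mem_Qv hint
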